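/- arXiv:0806.4643 — 4 statements merged into one kernel-verified Lean document; each statement's English description precedes it below -/
import Mathlib

section
/- Let G be a group, H a Hilbert space, and ξ, η : G → H bounded functions with sup-norm at most 1. Suppose E ⊆ G contains the identity e and satisfies: for all x, y ∈ G, x * y⁻¹ ∈ E if and only if ⟨ξ(x), η(y)⟩ = 1, and moreover the indicator condition χ_E(x y⁻¹) = ⟨ξ(x), η(y)⟩ holds for all x, y (where χ_E takes value 1 on E and 0 off E). Then E is closed under multiplication (i.e., E is a subsemigroup of G). -/
open scoped Pointwise
open Classical

/-!
Between vectors of the unit ball, `⟪u, v⟫ = 1` holds exactly when `u = v` is a unit vector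
(equality case of Cauchy–Schwarz). Hence `x * y⁻¹ ∈ E` iff `ξ x = η y` is a unit vector, and for
`a, b ∈ E` the memberships `a = (a * b) * b⁻¹`, `1 = b * b⁻¹` and `b = b * 1⁻¹` give the chain
`ξ (a * b) = η b = ξ b = η 1` of unit vectors, i.e. `a * b = (a * b) * 1⁻¹ ∈ E`.
-/

theorem inner_eq_one_iff_of_norm_le_one {𝕜 E : Type*} [RCLike 𝕜] [NormedAddCommGroup E]
    [InnerProductSpace 𝕜 E] {u v : E} (hu : ‖u‖ ≤ 1) (hv : ‖v‖ ≤ 1) :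
    inner 𝕜 u v = 1 ↔ ‖u‖ = 1 ∧ u = v := by
  constructor
  · intro h
    have hle : 1 ≤ ‖u‖ * ‖v‖ := by
      simpa [h] using norm_inner_le_norm (𝕜 := 𝕜) u v
    have hu1 : ‖u‖ = 1 := by nlinarith [norm_nonneg u, norm_nonneg v]
    have hv1 : ‖v‖ = 1 := by nlinarith [norm_nonneg u, norm_nonneg v]
    exact ⟨hu1, (inner_eq_one_iff_of_norm_eq_one hu1 hv1).mp h⟩
  · rintro ⟨hu1, rfl⟩
    simp [inner_self_eq_norm_sq_to_K, hu1]

theorem stmt_1_general {G : Type*} [Group G] {H : Type*} [NormedAddCommGroup H]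
    [InnerProductSpace ℂ H] (ξ η : G → H)
    (hξ : ∀ x, ‖ξ x‖ ≤ 1) (hη : ∀ y, ‖η y‖ ≤ 1)
    (E : Set G) (hE : (1 : G) ∈ E)
    (hiff : ∀ x y : G, x * y⁻¹ ∈ E ↔ (inner ℂ (ξ x) (η y) : ℂ) = 1) :
    ∀ a ∈ E, ∀ b ∈ E, a * b ∈ E := by
  have hmem : ∀ x y : G, x * y⁻¹ ∈ E ↔ ‖ξ x‖ = 1 ∧ ξ x = η y := fun x y =>
    (hiff x y).trans (inner_eq_one_iff_of_norm_le_one (hξ x) (hη y))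
  intro a ha b hb
  obtain ⟨hab_unit, hab⟩ := (hmem (a * b) b).mp (by simpa using ha)
  obtain ⟨-, hbb⟩ := (hmem b b).mp (by simpa using hE)
  obtain ⟨-, hb1⟩ := (hmem b 1).mp (by simpa using hb)
  simpa using (hmem (a * b) 1).mpr ⟨hab_unit, by rw [hab, ← hbb, hb1]⟩

theorem stmt_1 {G : Type*} [Group G] {H : Type*} [NormedAddCommGroup H]
    [InnerProductSpace ℂ H] (ξ η : G → H)
    (hξ : ∀ x, ‖ξ x‖ ≤ 1) (hη : ∀ y, ‖η y‖ ≤ 1)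
    (E : Set G) (hE : (1 : G) ∈ E)
    (hiff : ∀ x y : G, x * y⁻¹ ∈ E ↔ (inner ℂ (ξ x) (η y) : ℂ) = 1)
    (hrep : ∀ x y : G, (if x * y⁻¹ ∈ E then (1 : ℂ) else 0) = inner ℂ (ξ x) (η y)) :
    ∀ a ∈ E, ∀ b ∈ E, a * b ∈ E :=
  stmt_1_general ξ η hξ hη E hE hiff
end

section
/- Let G be a group, H a Hilbert space, and ξ, η : G → H with ‖ξ(x)‖ ≤ 1 and ‖η(y)‖ ≤ 1 for all x, y ∈ G. Suppose E ⊆ G contains the identity and χ_E(x y⁻¹) = ⟨ξ(x), η(y)⟩ for all x, y ∈ G, where χ_E is the indicator function of E. Then E is a subgroup of G. -/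
open Classical

/-
Taking x = y and 1 ∈ E gives ⟪ξ x, η x⟫ = 1 for vectors in the unit ball, which forces ξ = η.
Then x y⁻¹ ∈ E exactly when ⟪ξ x, ξ y⟫ = 1, i.e. when ξ x = ξ y. A set E for which x y⁻¹ ∈ E is
the kernel relation of some map is a subgroup: it is the class of 1 of a right-invariant
equivalence relation.
-/

theorem eq_of_norm_le_one_of_inner_eq_one {𝕜 E : Type*} [RCLike 𝕜] [NormedAddCommGroup E]
    [InnerProductSpace 𝕜 E] {u v : E} (hu : ‖u‖ ≤ 1) (hv : ‖v‖ ≤ 1) (h : inner 𝕜 u v = 1) :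
    u = v := by
  have hle : 1 ≤ ‖u‖ * ‖v‖ := by simpa [h] using norm_inner_le_norm (𝕜 := 𝕜) u v
  have hu1 : ‖u‖ = 1 := by nlinarith [norm_nonneg u, norm_nonneg v]
  have hv1 : ‖v‖ = 1 := by nlinarith [norm_nonneg u, norm_nonneg v]
  exact (inner_eq_one_iff_of_norm_eq_one hu1 hv1).mp h

theorem Subgroup.exists_eq_of_mul_inv_mem_iff {G α : Type*} [Group G] {E : Set G} (f : G → α)
    (hE : ∀ x y, x * y⁻¹ ∈ E ↔ f x = f y) : ∃ S : Subgroup G, E = S := by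
  have hmem : ∀ x, x ∈ E ↔ f x = f 1 := fun x => by simpa using hE x 1
  refine ⟨{ carrier := E
            one_mem' := (hmem 1).mpr rfl
            mul_mem' := fun {a b} ha hb => ?_
            inv_mem' := fun {a} ha => ?_ }, rfl⟩
  · have hab : f (a * b) = f b := (hE (a * b) b).mp (by simpa using ha)
    exact (hmem _).mpr (hab.trans ((hmem b).mp hb))
  · simpa using (hE 1 a).mpr ((hmem a).mp ha).symm

theorem stmt_2 {G : Type*} [Group G] {H : Type*} [NormedAddCommGroup H]
    [InnerProductSpace ℂ H] (ξ η : G → H)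
    (hξ : ∀ x, ‖ξ x‖ ≤ 1) (hη : ∀ y, ‖η y‖ ≤ 1)
    (E : Set G) (hE : (1 : G) ∈ E)
    (hrep : ∀ x y : G, (if x * y⁻¹ ∈ E then (1 : ℂ) else 0) = inner ℂ (ξ x) (η y)) :
    ∃ S : Subgroup G, E = (S : Set G) := by
  have hdiag : ∀ x, inner ℂ (ξ x) (η x) = 1 := fun x => by
    simpa [hE] using (hrep x x).symm
  have hξη : ∀ x, ξ x = η x := fun x =>
    eq_of_norm_le_one_of_inner_eq_one (hξ x) (hη x) (hdiag x)
  refine Subgroup.exists_eq_of_mul_inv_mem_iff ξ fun x y => ⟨fun hxy => ?_, fun hxy => ?_⟩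
  · have hinner : inner ℂ (ξ x) (η y) = 1 := by simpa [hxy] using (hrep x y).symm
    exact (eq_of_norm_le_one_of_inner_eq_one (hξ x) (hη y) hinner).trans (hξη y).symm
  · by_contra hnot
    simpa [hnot, hxy, hdiag] using hrep x y
end

section
/- Let G be a group and Γ = {(x, x⁻¹) : x ∈ G} ⊆ G × G. If Γ is a left coset of some subgroup of G × G, then, since (e, e) ∈ Γ, Γ is itself a subgroup of G × G, and consequently G is abelian. -/
open scoped Pointwise

theorem stmt_5 {G : Type*} [Group G]
    (h : ∃ (g : G × G) (S : Subgroup (G × G)),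
      {p : G × G | p.2 = p.1⁻¹} = g • (S : Set (G × G))) :
    (∃ T : Subgroup (G × G), {p : G × G | p.2 = p.1⁻¹} = (T : Set (G × G))) ∧
      ∀ a b : G, a * b = b * a := by
  obtain ⟨g, S, h⟩ := h
  have h1 : (1 : G × G) ∈ g • (S : Set (G × G)) := by
    rw [← h]; simp [Set.mem_setOf_eq]
  obtain ⟨s, hs, hgs⟩ := h1
  have hsg : s = g⁻¹ := eq_inv_of_mul_eq_one_right hgs
  have hgS : g ∈ S := by
    have : g⁻¹ ∈ S := hsg ▸ hs
    simpa using S.inv_mem this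
  have hEq : {p : G × G | p.2 = p.1⁻¹} = (S : Set (G × G)) := by
    rw [h, smul_coe_set hgS]
  have hmem : ∀ a : G, (a, a⁻¹) ∈ S := fun a => by
    have : (a, a⁻¹) ∈ {p : G × G | p.2 = p.1⁻¹} := rfl
    rwa [hEq] at this
  refine ⟨⟨S, hEq⟩, fun a b => ?_⟩
  have hm := S.mul_mem (hmem a) (hmem b)
  have h2 : a⁻¹ * b⁻¹ = (a * b)⁻¹ := by
    have : ((a, a⁻¹) * (b, b⁻¹) : G × G) ∈ {p : G × G | p.2 = p.1⁻¹} := hEq ▸ hm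
    exact this
  have := congrArg (·⁻¹) h2
  simpa [mul_inv_rev] using this.symm
end

section
/- Let G be a group, H a Hilbert space, and ξ, η : G → H bounded functions with ‖ξ‖_∞ = ‖η‖_∞ = 1, and suppose E ⊆ G contains the identity and satisfies χ_E(x y⁻¹) = ⟨ξ(x), η(y)⟩ for all x, y. Then ξ(e) = η(e), and E = {x ∈ G : ξ(x) = ξ(e)} = {y ∈ G : η(y⁻¹) = ξ(e)}. -/
open Classical

/-! In the closed unit ball, `⟪a, b⟫ = 1` forces `a = b` (equality in Cauchy–Schwarz), so each
membership `x * y⁻¹ ∈ E` becomes the equation `ξ x = η y` between two unit vectors.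
Specialising to `y = 1` and to `x = 1` identifies `E` as a level set of `ξ` and of `η ∘ inv`. -/

section InnerUnitBall

variable {𝕜 V : Type*} [RCLike 𝕜] [NormedAddCommGroup V] [InnerProductSpace 𝕜 V] {a b : V}

theorem eq_of_inner_eq_one (ha : ‖a‖ ≤ 1) (hb : ‖b‖ ≤ 1) (h : inner 𝕜 a b = 1) : a = b := by
  have hre : RCLike.re (inner 𝕜 a b) = 1 := by simp [h]
  have hsq : ‖a - b‖ ^ 2 ≤ 0 := by
    rw [norm_sub_sq (𝕜 := 𝕜), hre]
    nlinarith [norm_nonneg a, norm_nonneg b]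
  exact sub_eq_zero.mp (norm_eq_zero.mp (by nlinarith [norm_nonneg (a - b)]))

theorem norm_eq_one_of_inner_eq_one (ha : ‖a‖ ≤ 1) (hb : ‖b‖ ≤ 1) (h : inner 𝕜 a b = 1) :
    ‖b‖ = 1 := by
  have hcs : (1 : ℝ) ≤ ‖a‖ * ‖b‖ := by simpa [h] using norm_inner_le_norm (𝕜 := 𝕜) a b
  nlinarith [norm_nonneg a, norm_nonneg b]

theorem inner_eq_one_iff_eq_of_norm_right (ha : ‖a‖ ≤ 1) (hb : ‖b‖ = 1) :
    inner 𝕜 a b = 1 ↔ a = b :=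
  ⟨eq_of_inner_eq_one ha hb.le, by rintro rfl; exact inner_self_eq_one_of_norm_eq_one hb⟩

theorem inner_eq_one_iff_eq_of_norm_left (ha : ‖a‖ = 1) (hb : ‖b‖ ≤ 1) :
    inner 𝕜 a b = 1 ↔ a = b :=
  ⟨eq_of_inner_eq_one ha.le hb, by rintro rfl; exact inner_self_eq_one_of_norm_eq_one ha⟩

end InnerUnitBall

theorem stmt_8_general {G : Type*} [Group G] {H : Type*} [NormedAddCommGroup H]
    [InnerProductSpace ℂ H] (ξ η : G → H)
    (hξ : ∀ x, ‖ξ x‖ ≤ 1) (hη : ∀ y, ‖η y‖ ≤ 1)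
    (E : Set G) (hE : (1 : G) ∈ E)
    (hrep : ∀ x y : G, (if x * y⁻¹ ∈ E then (1 : ℂ) else 0) = inner ℂ (ξ x) (η y)) :
    ξ 1 = η 1 ∧ E = {x : G | ξ x = ξ 1} ∧ E = {y : G | η y⁻¹ = ξ 1} := by
  have mem : ∀ x y, x * y⁻¹ ∈ E ↔ inner ℂ (ξ x) (η y) = 1 := fun x y => by
    rw [← hrep]
    split_ifs <;> simp [*]
  have h11 : inner ℂ (ξ 1) (η 1) = 1 := (mem 1 1).1 (by simpa using hE)
  have hξη : ξ 1 = η 1 := eq_of_inner_eq_one (hξ 1) (hη 1) h11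
  have hnorm : ‖ξ 1‖ = 1 := hξη ▸ norm_eq_one_of_inner_eq_one (hξ 1) (hη 1) h11
  refine ⟨hξη, ?_, ?_⟩
  · ext x
    simpa [← hξη, inner_eq_one_iff_eq_of_norm_right (hξ x) hnorm] using mem x 1
  · ext y
    simpa [inner_eq_one_iff_eq_of_norm_left hnorm (hη y⁻¹), eq_comm] using mem 1 y⁻¹

theorem stmt_8 {G : Type*} [Group G] {H : Type*} [NormedAddCommGroup H]
    [InnerProductSpace ℂ H] (ξ η : G → H)
    (hξ : ∀ x, ‖ξ x‖ ≤ 1) (hη : ∀ y, ‖η y‖ ≤ 1)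
    (hξsup : ⨆ x, ‖ξ x‖ = 1) (hηsup : ⨆ y, ‖η y‖ = 1)
    (E : Set G) (hE : (1 : G) ∈ E)
    (hrep : ∀ x y : G, (if x * y⁻¹ ∈ E then (1 : ℂ) else 0) = inner ℂ (ξ x) (η y)) :
    ξ 1 = η 1 ∧ E = {x : G | ξ x = ξ 1} ∧ E = {y : G | η y⁻¹ = ξ 1} :=
  stmt_8_general ξ η hξ hη E hE hrep
end
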